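/- The function β(x,a) := 2·arcsin(cos(π/x)/cosh(a/2)) is, for each fixed a > 0, increasing and concave in x on [3,∞): its partial derivative ∂β/∂x = 2π·sin(π/x)·x^{-2}·(cosh²(a/2) - cos²(π/x))^{-1/2} is positive, and ∂²β/∂x² < 0 for x ≥ 3. -/

import Mathlib

/-! With `c = cosh (a/2) > 1` we have `cos² t < c²`, so the arcsine and the square root are
differentiable and both derivatives follow from the chain rule. After `sin² + cos² = 1`,
the numerator of the second derivative is
`π cos(π/x) (1 - c²) - 2x sin(π/x) (c² - cos²(π/x))`,
which is negative for `x ≥ 2` because then `cos(π/x) ≥ 0` and `sin(π/x) > 0`. -/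

open Real

/-- `β(x,a) = 2·arcsin(cos(π/x)/cosh(a/2))`, for a real variable `x`. -/
noncomputable def betaR (x a : ℝ) : ℝ :=
  2 * Real.arcsin (Real.cos (π / x) / Real.cosh (a / 2))

/-- The claimed first partial derivative
`∂β/∂x = 2π·sin(π/x)·x⁻²·(cosh²(a/2) - cos²(π/x))^(-1/2)`. -/
noncomputable def betaDx (x a : ℝ) : ℝ :=
  2 * π * Real.sin (π / x) / (x ^ 2 * Real.sqrt (Real.cosh (a / 2) ^ 2 - Real.cos (π / x) ^ 2))

theorem strictConcaveOn_of_hasDerivAt2_neg {D : Set ℝ} (hD : Convex ℝ D) {f f' f'' : ℝ → ℝ}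
    (hf : ∀ x ∈ D, HasDerivAt f (f' x) x) (hf' : ∀ x ∈ D, HasDerivAt f' (f'' x) x)
    (hf'' : ∀ x ∈ D, f'' x < 0) : StrictConcaveOn ℝ D f := by
  have hanti : StrictAntiOn f' D :=
    strictAntiOn_of_hasDerivWithinAt_neg hD
      (fun x hx => (hf' x hx).continuousAt.continuousWithinAt)
      (fun x hx => (hf' x (interior_subset hx)).hasDerivWithinAt)
      (fun x hx => hf'' x (interior_subset hx))
  refine StrictAntiOn.strictConcaveOn_of_deriv hD
    (fun x hx => (hf x hx).continuousAt.continuousWithinAt) ?_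
  exact (hanti.mono interior_subset).congr fun x hx => ((hf x (interior_subset hx)).deriv).symm

noncomputable def betaDxx (x a : ℝ) : ℝ :=
  2 * π * (π * cos (π / x) * (1 - cosh (a / 2) ^ 2)
      - 2 * x * sin (π / x) * (cosh (a / 2) ^ 2 - cos (π / x) ^ 2)) /
    (x ^ 4 * √(cosh (a / 2) ^ 2 - cos (π / x) ^ 2) ^ 3)

lemma cosh_half_sq_sub_cos_sq_pos {a : ℝ} (ha : a ≠ 0) (t : ℝ) :
    0 < cosh (a / 2) ^ 2 - cos t ^ 2 := by
  have := one_lt_cosh.2 (div_ne_zero ha two_ne_zero)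
  nlinarith [cos_sq_le_one t]

lemma hasDerivAt_pi_div {x : ℝ} (hx : x ≠ 0) : HasDerivAt (fun y => π / y) (-(π / x ^ 2)) x := by
  simpa [div_eq_mul_inv] using (hasDerivAt_inv hx).const_mul π

lemma hasDerivAt_cos_pi_div {x : ℝ} (hx : x ≠ 0) :
    HasDerivAt (fun y => cos (π / y)) (π * sin (π / x) / x ^ 2) x :=
  (hasDerivAt_pi_div hx).cos.congr_deriv (by ring)

lemma hasDerivAt_sin_pi_div {x : ℝ} (hx : x ≠ 0) :
    HasDerivAt (fun y => sin (π / y)) (-(π * cos (π / x) / x ^ 2)) x :=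
  (hasDerivAt_pi_div hx).sin.congr_deriv (by ring)

lemma hasDerivAt_betaR {a x : ℝ} (ha : a ≠ 0) (hx : x ≠ 0) :
    HasDerivAt (fun y => betaR y a) (betaDx x a) x := by
  unfold betaDx
  set c := cosh (a / 2)
  have hc : 0 < c := cosh_pos _
  have hrad : 0 < c ^ 2 - cos (π / x) ^ 2 := cosh_half_sq_sub_cos_sq_pos ha _
  have hu : (cos (π / x) / c) ^ 2 < 1 := by
    rw [div_pow, div_lt_one (by positivity)]; linarith
  have hsqrt : √(1 - (cos (π / x) / c) ^ 2) = √(c ^ 2 - cos (π / x) ^ 2) / c := by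
    rw [← sqrt_sq hc.le, ← sqrt_div' _ (sq_nonneg c), sqrt_sq hc.le]
    congr 1; field_simp
  have harcsin := hasDerivAt_arcsin (x := cos (π / x) / c) (by nlinarith) (by nlinarith)
  refine ((harcsin.comp x ((hasDerivAt_cos_pi_div hx).div_const c)).const_mul 2).congr_deriv ?_
  have hR : 0 < √(c ^ 2 - cos (π / x) ^ 2) := sqrt_pos.2 hrad
  rw [hsqrt]
  field_simp

lemma hasDerivAt_betaDx {a x : ℝ} (ha : a ≠ 0) (hx : x ≠ 0) :
    HasDerivAt (fun y => betaDx y a) (betaDxx x a) x := by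
  unfold betaDx betaDxx
  set c := cosh (a / 2)
  have hrad : 0 < c ^ 2 - cos (π / x) ^ 2 := cosh_half_sq_sub_cos_sq_pos ha _
  have hR : 0 < √(c ^ 2 - cos (π / x) ^ 2) := sqrt_pos.2 hrad
  have hR2 : √(c ^ 2 - cos (π / x) ^ 2) ^ 2 = c ^ 2 - cos (π / x) ^ 2 := sq_sqrt hrad.le
  have hden := (hasDerivAt_pow 2 x).fun_mul
    ((((hasDerivAt_cos_pi_div hx).fun_pow 2).const_sub (c ^ 2)).sqrt hrad.ne')
  refine (((hasDerivAt_sin_pi_div hx).const_mul (2 * π)).fun_div hden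
    (by positivity)).congr_deriv ?_
  field_simp
  linear_combination 2 * π * cos (π / x) * sin_sq_add_cos_sq (π / x)
    - (2 * π * cos (π / x) + 4 * x * sin (π / x)) * hR2

lemma betaDx_pos {a x : ℝ} (ha : a ≠ 0) (hx : 1 < x) : 0 < betaDx x a := by
  have hsin : 0 < sin (π / x) :=
    sin_pos_of_pos_of_lt_pi (by positivity) (div_lt_self pi_pos hx)
  have hrad : 0 < cosh (a / 2) ^ 2 - cos (π / x) ^ 2 := cosh_half_sq_sub_cos_sq_pos ha _
  unfold betaDx
  positivity

lemma betaDxx_neg {a x : ℝ} (ha : a ≠ 0) (hx : 2 ≤ x) : betaDxx x a < 0 := by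
  have hx0 : 0 < x := by linarith
  have hπx : π / x ≤ π / 2 := div_le_div_of_nonneg_left pi_pos.le two_pos hx
  have hcos : 0 ≤ cos (π / x) :=
    cos_nonneg_of_mem_Icc ⟨by linarith [div_pos pi_pos hx0, pi_pos], hπx⟩
  have hsin : 0 < sin (π / x) :=
    sin_pos_of_pos_of_lt_pi (div_pos pi_pos hx0) (by linarith [pi_pos])
  have hcosh : 1 < cosh (a / 2) ^ 2 :=
    one_lt_pow₀ (one_lt_cosh.2 (div_ne_zero ha two_ne_zero)) two_ne_zero
  have hrad : 0 < cosh (a / 2) ^ 2 - cos (π / x) ^ 2 := cosh_half_sq_sub_cos_sq_pos ha _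
  have hnum : π * cos (π / x) * (1 - cosh (a / 2) ^ 2)
      - 2 * x * sin (π / x) * (cosh (a / 2) ^ 2 - cos (π / x) ^ 2) < 0 := by
    have : π * cos (π / x) * (1 - cosh (a / 2) ^ 2) ≤ 0 :=
      mul_nonpos_of_nonneg_of_nonpos (by positivity) (by linarith)
    have : 0 < 2 * x * sin (π / x) * (cosh (a / 2) ^ 2 - cos (π / x) ^ 2) := by positivity
    linarith
  unfold betaDxx
  exact div_neg_of_neg_of_pos (mul_neg_of_pos_of_neg (by positivity) hnum)
    (by have := sqrt_pos.2 hrad; positivity)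

/-- For fixed `a > 0`, `β(·,a)` is increasing and concave in `x` on `[3,∞)`:
its derivative is `betaDx` and is positive, and its second derivative is
negative for `x ≥ 3`. -/
theorem stmt15 (a : ℝ) (ha : 0 < a) :
    (∀ x : ℝ, 3 ≤ x → HasDerivAt (fun y => betaR y a) (betaDx x a) x ∧ 0 < betaDx x a) ∧
    StrictMonoOn (fun x => betaR x a) (Set.Ici 3) ∧
    (∀ x : ℝ, 3 ≤ x → ∃ d2 : ℝ, HasDerivAt (fun y => betaDx y a) d2 x ∧ d2 < 0) ∧
    StrictConcaveOn ℝ (Set.Ici 3) (fun x => betaR x a) := by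
  have hderiv (x : ℝ) (hx : 3 ≤ x) : HasDerivAt (fun y => betaR y a) (betaDx x a) x :=
    hasDerivAt_betaR ha.ne' (by positivity)
  have hderiv2 (x : ℝ) (hx : 3 ≤ x) : HasDerivAt (fun y => betaDx y a) (betaDxx x a) x :=
    hasDerivAt_betaDx ha.ne' (by positivity)
  refine ⟨fun x hx => ⟨hderiv x hx, betaDx_pos ha.ne' (by linarith)⟩, ?_,
    fun x hx => ⟨_, hderiv2 x hx, betaDxx_neg ha.ne' (by linarith)⟩, ?_⟩
  · exact strictMonoOn_of_hasDerivWithinAt_pos (convex_Ici 3)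
      (fun x hx => (hderiv x hx).continuousAt.continuousWithinAt)
      (fun x hx => (hderiv x (interior_subset hx)).hasDerivWithinAt)
      (fun x hx => betaDx_pos ha.ne' (by linarith [Set.mem_Ici.1 (interior_subset hx)]))
  · exact strictConcaveOn_of_hasDerivAt2_neg (convex_Ici 3) hderiv hderiv2
      fun x hx => betaDxx_neg ha.ne' (by linarith [Set.mem_Ici.1 hx])
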